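/- Let c ∈ ℓ² and z₀ ∈ ℂ. Define aₙₖ(z₀) := qₙ(z₀)pₖ(z₀) − pₙ(z₀)qₖ(z₀) and ξₖ := Σ_{n=k+1}^∞ cₙ·aₙₖ(z₀) for k ≥ 0 (the series converges absolutely). Then ξ := (ξₖ)ₖ ∈ ℓ² with ‖ξ‖ ≤ ‖c‖·(‖𝔭_{z₀}‖² + ‖𝔮_{z₀}‖²), and for all z ∈ ℂ, F_c(z) − F_c(z₀) = (z − z₀)·F_ξ(z). -/

import Mathlib

/-!
Put `rₙ := √(|pₙ(z₀)|² + |qₙ(z₀)|²)`; then `r ∈ ℓ²` with `‖r‖² = ‖𝔭_{z₀}‖² + ‖𝔮_{z₀}‖²`, and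
Cauchy–Schwarz in `ℂ²` gives the rank-one bound `|aₙₖ(z₀)| ≤ rₙ rₖ`. Hence
`|ξₖ| ≤ rₖ Σₙ |cₙ| rₙ ≤ ‖c‖ ‖r‖ rₖ`, which yields the convergence of the series and
`‖ξ‖ ≤ ‖c‖ ‖r‖²`. The identity comes from
`pₙ(z) − pₙ(z₀) = (z − z₀) Σ_{k<n} aₙₖ(z₀) pₖ(z)`: this is variation of constants for the
inhomogeneous recurrence `(J − z₀)(𝔭_z − 𝔭_{z₀}) = (z − z₀) 𝔭_z`, the kernel `aₙₖ(z₀)` being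
normalised by the Wronskian `aₙ(qₙ₊₁pₙ − pₙ₊₁qₙ) = 1`. Multiplying by `cₙ` and summing, the
same rank-one majorant makes the double series absolutely convergent, so the order of
summation may be exchanged.
-/

open Filter Topology MeasureTheory

noncomputable section

/-- Action of the Jacobi matrix `J` on a complex sequence:
`(Jc)ₙ = aₙ₋₁cₙ₋₁ + bₙcₙ + aₙcₙ₊₁` with `a₋₁ := 0`. -/
def jacobiMul (a b : ℕ → ℝ) (c : ℕ → ℂ) : ℕ → ℂ
  | 0 => (b 0 : ℂ) * c 0 + (a 0 : ℂ) * c 1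
  | n + 1 => (a n : ℂ) * c n + (b (n + 1) : ℂ) * c (n + 1) + (a (n + 1) : ℂ) * c (n + 2)

/-- `jacobiGraph a b f g` means: `f` belongs to the domain `D(T)` of the closure `T` of the
Jacobi matrix acting on the finitely supported sequences, and `T f = g`; i.e. there are
finitely supported sequences `u k → f` in `ℓ²` such that `J (u k) → g` in `ℓ²`. -/
def jacobiGraph (a b : ℕ → ℝ) (f g : ℕ → ℂ) : Prop :=
  ∃ u : ℕ → ℕ → ℂ,
    (∀ k, (Function.support (u k)).Finite) ∧
    (∀ k, Summable fun n => ‖u k n - f n‖ ^ 2) ∧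
    Tendsto (fun k => ∑' n, ‖u k n - f n‖ ^ 2) atTop (𝓝 0) ∧
    (∀ k, Summable fun n => ‖jacobiMul a b (u k) n - g n‖ ^ 2) ∧
    Tendsto (fun k => ∑' n, ‖jacobiMul a b (u k) n - g n‖ ^ 2) atTop (𝓝 0)

/-- Membership in the domain `D(T)` of the Jacobi operator. -/
def inDomT (a b : ℕ → ℝ) (f : ℕ → ℂ) : Prop := ∃ g, jacobiGraph a b f g

/-- The `ℓ²` norm of a complex sequence. -/
def l2norm (f : ℕ → ℂ) : ℝ := Real.sqrt (∑' n, ‖f n‖ ^ 2)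

/-- The data of an indeterminate Hamburger moment problem: Jacobi parameters `a`, `b`,
the orthonormal polynomials `p` and second-kind polynomials `q` (as entire functions),
determined by the three-term recurrence, together with the indeterminacy condition
`∑ₙ (|pₙ(z)|² + |qₙ(z)|²) < ∞` for all `z`. -/
structure JacobiSetup where
  a : ℕ → ℝ
  b : ℕ → ℝ
  ha : ∀ n, 0 < a n
  p : ℕ → ℂ → ℂ
  q : ℕ → ℂ → ℂ
  hp0 : ∀ z, p 0 z = 1
  hp1 : ∀ z, p 1 z = (z - (b 0 : ℂ)) / (a 0 : ℂ)
  hq0 : ∀ z, q 0 z = 0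
  hq1 : ∀ z, q 1 z = 1 / (a 0 : ℂ)
  hrecp : ∀ n z, z * p (n + 1) z =
    (a (n + 1) : ℂ) * p (n + 2) z + (b (n + 1) : ℂ) * p (n + 1) z + (a n : ℂ) * p n z
  hrecq : ∀ n z, z * q (n + 1) z =
    (a (n + 1) : ℂ) * q (n + 2) z + (b (n + 1) : ℂ) * q (n + 1) z + (a n : ℂ) * q n z
  indet : ∀ z : ℂ, Summable fun n => ‖p n z‖ ^ 2 + ‖q n z‖ ^ 2

/-- The Nevanlinna function `A(u,v)`. -/
def nevA (S : JacobiSetup) (u v : ℂ) : ℂ := (u - v) * ∑' k, S.q k u * S.q k v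
/-- The Nevanlinna function `B(u,v)`. -/
def nevB (S : JacobiSetup) (u v : ℂ) : ℂ := -1 + (u - v) * ∑' k, S.p k u * S.q k v
/-- The Nevanlinna function `C(u,v)`. -/
def nevC (S : JacobiSetup) (u v : ℂ) : ℂ := 1 + (u - v) * ∑' k, S.q k u * S.p k v
/-- The Nevanlinna function `D(u,v)`. -/
def nevD (S : JacobiSetup) (u v : ℂ) : ℂ := (u - v) * ∑' k, S.p k u * S.p k v

/-- The coefficients `a_{n,k}(z₀) = qₙ(z₀)pₖ(z₀) − pₙ(z₀)qₖ(z₀)`. -/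
def coeffA (S : JacobiSetup) (z₀ : ℂ) (n k : ℕ) : ℂ :=
  S.q n z₀ * S.p k z₀ - S.p n z₀ * S.q k z₀

/-- The sequence `ξ(c,z₀)` with `ξₖ = ∑_{n≥k+1} cₙ a_{n,k}(z₀)`. -/
def xiSeq (S : JacobiSetup) (c : ℕ → ℂ) (z₀ : ℂ) (k : ℕ) : ℂ :=
  ∑' n : ℕ, c (k + 1 + n) * coeffA S z₀ (k + 1 + n) k

/-- The entire function `F_c(z) = ∑ₙ cₙ pₙ(z)`. -/
def Ffun (S : JacobiSetup) (c : ℕ → ℂ) (z : ℂ) : ℂ := ∑' n, c n * S.p n z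

open Finset

section Sequences

variable {ι : Type*} {f g : ι → ℝ}

theorem summable_mul_of_summable_sq (hf : ∀ i, 0 ≤ f i) (hg : ∀ i, 0 ≤ g i)
    (hf2 : Summable fun i => f i ^ 2) (hg2 : Summable fun i => g i ^ 2) :
    Summable fun i => f i * g i :=
  Real.summable_mul_of_Lp_Lq_of_nonneg .two_two hf hg (by simpa using hf2) (by simpa using hg2)

theorem tsum_mul_le_sqrt_mul_sqrt (hf : ∀ i, 0 ≤ f i) (hg : ∀ i, 0 ≤ g i)
    (hf2 : Summable fun i => f i ^ 2) (hg2 : Summable fun i => g i ^ 2) :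
    ∑' i, f i * g i ≤ √(∑' i, f i ^ 2) * √(∑' i, g i ^ 2) := by
  simpa [Real.sqrt_eq_rpow] using
    Real.inner_le_Lp_mul_Lq_tsum_of_nonneg .two_two hf hg (by simpa using hf2) (by simpa using hg2)

theorem sq_norm_le_of_norm_le_mul {E : Type*} [SeminormedAddCommGroup E] {x : E} {C a : ℝ}
    (h : ‖x‖ ≤ C * a) : ‖x‖ ^ 2 ≤ C ^ 2 * a ^ 2 := by
  rw [← mul_pow]; exact pow_le_pow_left₀ (norm_nonneg _) h 2

theorem summable_sq_of_norm_le_mul {E : Type*} [SeminormedAddCommGroup E] {u : ι → E} {C : ℝ}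
    (hg2 : Summable fun i => g i ^ 2) (hug : ∀ i, ‖u i‖ ≤ C * g i) :
    Summable fun i => ‖u i‖ ^ 2 :=
  (hg2.mul_left (C ^ 2)).of_nonneg_of_le (fun _ => sq_nonneg _) fun i =>
    sq_norm_le_of_norm_le_mul (hug i)

end Sequences

theorem l2norm_le_of_norm_le_mul {u : ℕ → ℂ} {g : ℕ → ℝ} {C : ℝ} (hC : 0 ≤ C)
    (hg : Summable fun n => g n ^ 2) (hug : ∀ n, ‖u n‖ ≤ C * g n) :
    l2norm u ≤ C * √(∑' n, g n ^ 2) := by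
  have hsq : ∑' n, ‖u n‖ ^ 2 ≤ ∑' n, C ^ 2 * g n ^ 2 :=
    (summable_sq_of_norm_le_mul hg hug).tsum_le_tsum
      (fun n => sq_norm_le_of_norm_le_mul (hug n)) (hg.mul_left _)
  calc l2norm u ≤ √(C ^ 2 * ∑' n, g n ^ 2) := by
        rw [l2norm, ← tsum_mul_left]; exact Real.sqrt_le_sqrt hsq
    _ = C * √(∑' n, g n ^ 2) := by rw [Real.sqrt_mul (sq_nonneg C), Real.sqrt_sq hC]

theorem tsum_sum_range_eq_tsum_tsum_add {E : Type*} [NormedAddCommGroup E] [CompleteSpace E]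
    {h : ℕ → ℕ → E} (hh : Summable fun x : ℕ × ℕ => ‖h x.1 x.2‖) :
    ∑' n, ∑ k ∈ range n, h n k = ∑' k, ∑' m, h (k + 1 + m) k := by
  let t : ℕ → ℕ → E := fun n k => if k < n then h n k else 0
  have ht : Summable (Function.uncurry t) :=
    .of_norm_bounded hh fun x => by
      simp only [Function.uncurry, t]; split_ifs <;> simp
  have hrow (n : ℕ) : ∑' k, t n k = ∑ k ∈ range n, h n k := by
    rw [tsum_eq_sum (s := range n) fun k hk => if_neg (by simpa using hk)]
    exact sum_congr rfl fun k hk => if_pos (mem_range.mp hk)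
  have hcol (k : ℕ) : ∑' n, t n k = ∑' m, h (k + 1 + m) k := by
    rw [← (add_right_injective (k + 1)).tsum_eq (f := fun n => t n k)]
    · exact tsum_congr fun m => if_pos (by omega)
    · intro n hn
      have hkn : k < n := by by_contra hkn; exact hn (if_neg hkn)
      exact ⟨n - (k + 1), show k + 1 + (n - (k + 1)) = n by omega⟩
  calc ∑' n, ∑ k ∈ range n, h n k = ∑' n, ∑' k, t n k := tsum_congr fun n => (hrow n).symm
    _ = ∑' k, ∑' n, t n k := (ht.tsum_comm' ht.prod_factor ht.prod_symm.prod_factor).symm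
    _ = ∑' k, ∑' m, h (k + 1 + m) k := tsum_congr hcol

namespace JacobiSetup

variable (S : JacobiSetup)

theorem a_ne_zero (n : ℕ) : (S.a n : ℂ) ≠ 0 := by exact_mod_cast (S.ha n).ne'

theorem wronskian (z : ℂ) (n : ℕ) :
    (S.a n : ℂ) * (S.q (n + 1) z * S.p n z - S.p (n + 1) z * S.q n z) = 1 := by
  induction n with
  | zero =>
    rw [S.hp0, S.hq0, S.hq1]
    field_simp [S.a_ne_zero 0]
    ring
  | succ n ih =>
    rw [← ih]
    linear_combination S.q (n + 1) z * S.hrecp n z - S.p (n + 1) z * S.hrecq n z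

theorem coeffA_self (z₀ : ℂ) (n : ℕ) : coeffA S z₀ n n = 0 := by
  rw [coeffA, mul_comm, sub_self]

theorem a_mul_coeffA_succ (z₀ : ℂ) (n : ℕ) : (S.a n : ℂ) * coeffA S z₀ n (n + 1) = -1 := by
  unfold coeffA
  linear_combination (-1 : ℂ) * S.wronskian z₀ n

theorem a_mul_coeffA_add_two (z₀ : ℂ) (n k : ℕ) :
    (S.a (n + 1) : ℂ) * coeffA S z₀ (n + 2) k =
      (z₀ - S.b (n + 1)) * coeffA S z₀ (n + 1) k - S.a n * coeffA S z₀ n k := by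
  unfold coeffA
  linear_combination S.q k z₀ * S.hrecp n z₀ - S.p k z₀ * S.hrecq n z₀

theorem a_mul_sum_coeffA_add_two (z₀ z : ℂ) (n : ℕ) :
    (S.a (n + 1) : ℂ) * ∑ k ∈ range (n + 2), coeffA S z₀ (n + 2) k * S.p k z =
      (z₀ - S.b (n + 1)) * ∑ k ∈ range (n + 1), coeffA S z₀ (n + 1) k * S.p k z
        - S.a n * ∑ k ∈ range n, coeffA S z₀ n k * S.p k z + S.p (n + 1) z := by
  have hrec : ∑ k ∈ range (n + 2), (S.a (n + 1) : ℂ) * (coeffA S z₀ (n + 2) k * S.p k z) =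
      ∑ k ∈ range (n + 2), ((z₀ - S.b (n + 1)) * (coeffA S z₀ (n + 1) k * S.p k z)
        - S.a n * (coeffA S z₀ n k * S.p k z)) :=
    sum_congr rfl fun k _ => by linear_combination S.p k z * S.a_mul_coeffA_add_two z₀ n k
  rw [mul_sum, hrec, sum_sub_distrib, ← mul_sum, ← mul_sum]
  simp only [sum_range_succ, S.coeffA_self, zero_mul, add_zero]
  linear_combination -S.p (n + 1) z * S.a_mul_coeffA_succ z₀ n

theorem sub_eq_mul_sum_coeffA (z₀ z : ℂ) (n : ℕ) :
    S.p n z - S.p n z₀ = (z - z₀) * ∑ k ∈ range n, coeffA S z₀ n k * S.p k z := by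
  induction n using Nat.twoStepInduction with
  | zero => simp [S.hp0]
  | one =>
    simp only [sum_range_one, coeffA, S.hp1, S.hp0, S.hq0, S.hq1]
    field_simp [S.a_ne_zero 0]
    ring
  | more n ih ih1 =>
    apply mul_left_cancel₀ (S.a_ne_zero (n + 1))
    linear_combination S.hrecp n z₀ - S.hrecp n z - (z - z₀) * S.a_mul_sum_coeffA_add_two z₀ z n
      + (z₀ - S.b (n + 1)) * ih1 - S.a n * ih

theorem summable_norm_p_sq (z : ℂ) : Summable fun n => ‖S.p n z‖ ^ 2 :=
  (S.indet z).of_nonneg_of_le (fun _ => sq_nonneg _) fun _ => le_add_of_nonneg_right (sq_nonneg _)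

theorem summable_norm_q_sq (z : ℂ) : Summable fun n => ‖S.q n z‖ ^ 2 :=
  (S.indet z).of_nonneg_of_le (fun _ => sq_nonneg _) fun _ => le_add_of_nonneg_left (sq_nonneg _)

def pqNorm (z : ℂ) (n : ℕ) : ℝ := √(‖S.p n z‖ ^ 2 + ‖S.q n z‖ ^ 2)

theorem pqNorm_nonneg (z : ℂ) (n : ℕ) : 0 ≤ S.pqNorm z n := Real.sqrt_nonneg _

theorem pqNorm_sq (z : ℂ) (n : ℕ) : S.pqNorm z n ^ 2 = ‖S.p n z‖ ^ 2 + ‖S.q n z‖ ^ 2 :=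
  Real.sq_sqrt (by positivity)

theorem summable_pqNorm_sq (z : ℂ) : Summable fun n => S.pqNorm z n ^ 2 := by
  simpa only [pqNorm_sq] using S.indet z

theorem tsum_pqNorm_sq (z : ℂ) :
    ∑' n, S.pqNorm z n ^ 2 = l2norm (fun n => S.p n z) ^ 2 + l2norm (fun n => S.q n z) ^ 2 := by
  simp only [pqNorm_sq, l2norm, Real.sq_sqrt (tsum_nonneg fun _ => sq_nonneg _)]
  exact (S.summable_norm_p_sq z).tsum_add (S.summable_norm_q_sq z)

theorem norm_coeffA_le (z₀ : ℂ) (n k : ℕ) :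
    ‖coeffA S z₀ n k‖ ≤ S.pqNorm z₀ n * S.pqNorm z₀ k := by
  calc ‖coeffA S z₀ n k‖ ≤ ‖S.q n z₀‖ * ‖S.p k z₀‖ + ‖S.p n z₀‖ * ‖S.q k z₀‖ := by
        simpa [coeffA] using norm_sub_le (S.q n z₀ * S.p k z₀) (S.p n z₀ * S.q k z₀)
    _ ≤ S.pqNorm z₀ n * S.pqNorm z₀ k := by
        rw [pqNorm, pqNorm, ← Real.sqrt_mul (by positivity)]
        apply Real.le_sqrt_of_sq_le
        nlinarith [sq_nonneg (‖S.q n z₀‖ * ‖S.q k z₀‖ - ‖S.p n z₀‖ * ‖S.p k z₀‖)]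

theorem norm_mul_coeffA_le (c : ℕ → ℂ) (z₀ : ℂ) (n k : ℕ) :
    ‖c n * coeffA S z₀ n k‖ ≤ ‖c n‖ * S.pqNorm z₀ n * S.pqNorm z₀ k := by
  rw [norm_mul, mul_assoc]
  exact mul_le_mul_of_nonneg_left (S.norm_coeffA_le z₀ n k) (norm_nonneg _)

variable {c : ℕ → ℂ}

theorem summable_norm_mul_pqNorm (hc : Summable fun n => ‖c n‖ ^ 2) (z : ℂ) :
    Summable fun n => ‖c n‖ * S.pqNorm z n :=
  summable_mul_of_summable_sq (fun _ => norm_nonneg _) (S.pqNorm_nonneg z) hc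
    (S.summable_pqNorm_sq z)

theorem summable_norm_mul_coeffA (hc : Summable fun n => ‖c n‖ ^ 2) (z₀ : ℂ) (k : ℕ) :
    Summable fun m => ‖c (k + 1 + m) * coeffA S z₀ (k + 1 + m) k‖ :=
  (((S.summable_norm_mul_pqNorm hc z₀).comp_injective (add_right_injective (k + 1))).mul_right
    (S.pqNorm z₀ k)).of_nonneg_of_le (fun _ => norm_nonneg _)
      fun m => S.norm_mul_coeffA_le c z₀ (k + 1 + m) k

theorem norm_xiSeq_le (hc : Summable fun n => ‖c n‖ ^ 2) (z₀ : ℂ) (k : ℕ) :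
    ‖xiSeq S c z₀ k‖ ≤ l2norm c * √(∑' n, S.pqNorm z₀ n ^ 2) * S.pqNorm z₀ k := by
  have hshift := (S.summable_norm_mul_pqNorm hc z₀).comp_injective (add_right_injective (k + 1))
  have htail : ∑' m, ‖c (k + 1 + m)‖ * S.pqNorm z₀ (k + 1 + m) ≤ ∑' n, ‖c n‖ * S.pqNorm z₀ n :=
    hshift.tsum_le_tsum_of_inj _ (add_right_injective (k + 1))
      (fun n _ => mul_nonneg (norm_nonneg _) (S.pqNorm_nonneg z₀ n)) (fun _ => le_rfl)
      (S.summable_norm_mul_pqNorm hc z₀)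
  have hcs : ∑' n, ‖c n‖ * S.pqNorm z₀ n ≤ l2norm c * √(∑' n, S.pqNorm z₀ n ^ 2) :=
    tsum_mul_le_sqrt_mul_sqrt (fun _ => norm_nonneg _) (S.pqNorm_nonneg z₀) hc
      (S.summable_pqNorm_sq z₀)
  calc ‖xiSeq S c z₀ k‖ ≤ ∑' m, ‖c (k + 1 + m) * coeffA S z₀ (k + 1 + m) k‖ :=
        norm_tsum_le_tsum_norm (S.summable_norm_mul_coeffA hc z₀ k)
    _ ≤ ∑' m, ‖c (k + 1 + m)‖ * S.pqNorm z₀ (k + 1 + m) * S.pqNorm z₀ k :=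
        (S.summable_norm_mul_coeffA hc z₀ k).tsum_le_tsum
          (fun m => S.norm_mul_coeffA_le c z₀ (k + 1 + m) k) (hshift.mul_right _)
    _ = (∑' m, ‖c (k + 1 + m)‖ * S.pqNorm z₀ (k + 1 + m)) * S.pqNorm z₀ k := tsum_mul_right
    _ ≤ l2norm c * √(∑' n, S.pqNorm z₀ n ^ 2) * S.pqNorm z₀ k :=
        mul_le_mul_of_nonneg_right (htail.trans hcs) (S.pqNorm_nonneg z₀ k)

theorem summable_norm_xiSeq_sq (hc : Summable fun n => ‖c n‖ ^ 2) (z₀ : ℂ) :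
    Summable fun k => ‖xiSeq S c z₀ k‖ ^ 2 :=
  summable_sq_of_norm_le_mul (S.summable_pqNorm_sq z₀) (S.norm_xiSeq_le hc z₀)

theorem l2norm_xiSeq_le (hc : Summable fun n => ‖c n‖ ^ 2) (z₀ : ℂ) :
    l2norm (xiSeq S c z₀) ≤
      l2norm c * ((l2norm fun n => S.p n z₀) ^ 2 + (l2norm fun n => S.q n z₀) ^ 2) := by
  have hC : 0 ≤ l2norm c * √(∑' n, S.pqNorm z₀ n ^ 2) := by unfold l2norm; positivity
  calc l2norm (xiSeq S c z₀)
      ≤ l2norm c * √(∑' n, S.pqNorm z₀ n ^ 2) * √(∑' n, S.pqNorm z₀ n ^ 2) :=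
        l2norm_le_of_norm_le_mul hC (S.summable_pqNorm_sq z₀) (S.norm_xiSeq_le hc z₀)
    _ = _ := by
        rw [mul_assoc, Real.mul_self_sqrt (tsum_nonneg fun _ => sq_nonneg _), S.tsum_pqNorm_sq]

theorem summable_mul_p (hc : Summable fun n => ‖c n‖ ^ 2) (z : ℂ) :
    Summable fun n => c n * S.p n z :=
  .of_norm <| by
    simpa only [norm_mul] using summable_mul_of_summable_sq (fun _ => norm_nonneg _)
      (fun _ => norm_nonneg _) hc (S.summable_norm_p_sq z)

theorem Ffun_sub_Ffun (hc : Summable fun n => ‖c n‖ ^ 2) (z₀ z : ℂ) :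
    Ffun S c z - Ffun S c z₀ = (z - z₀) * Ffun S (xiSeq S c z₀) z := by
  set h : ℕ → ℕ → ℂ := fun n k => c n * coeffA S z₀ n k * S.p k z
  have hmajorant : Summable fun x : ℕ × ℕ =>
      ‖c x.1‖ * S.pqNorm z₀ x.1 * (S.pqNorm z₀ x.2 * ‖S.p x.2 z‖) :=
    (S.summable_norm_mul_pqNorm hc z₀).mul_of_nonneg
      (summable_mul_of_summable_sq (S.pqNorm_nonneg z₀) (fun _ => norm_nonneg _)
        (S.summable_pqNorm_sq z₀) (S.summable_norm_p_sq z))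
      (fun n => mul_nonneg (norm_nonneg _) (S.pqNorm_nonneg z₀ n))
      (fun k => mul_nonneg (S.pqNorm_nonneg z₀ k) (norm_nonneg _))
  have hh : Summable fun x : ℕ × ℕ => ‖h x.1 x.2‖ :=
    hmajorant.of_nonneg_of_le (fun _ => norm_nonneg _) fun ⟨n, k⟩ => by
      rw [norm_mul, ← mul_assoc]
      exact mul_le_mul_of_nonneg_right (S.norm_mul_coeffA_le c z₀ n k) (norm_nonneg _)
  calc Ffun S c z - Ffun S c z₀ = ∑' n, (c n * S.p n z - c n * S.p n z₀) :=
        ((S.summable_mul_p hc z).tsum_sub (S.summable_mul_p hc z₀)).symm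
    _ = ∑' n, (z - z₀) * ∑ k ∈ range n, h n k := tsum_congr fun n => by
        rw [← mul_sub, S.sub_eq_mul_sum_coeffA z₀ z, mul_sum, mul_sum, mul_sum]
        exact sum_congr rfl fun k _ => by ring
    _ = (z - z₀) * ∑' k, ∑' m, h (k + 1 + m) k := by
        rw [tsum_mul_left, tsum_sum_range_eq_tsum_tsum_add hh]
    _ = (z - z₀) * Ffun S (xiSeq S c z₀) z := by
        simp only [h, tsum_mul_right, Ffun, xiSeq]

end JacobiSetup

/-- For `c ∈ ℓ²` and `z₀ ∈ ℂ`, the series defining `ξₖ` converge absolutely, `ξ ∈ ℓ²`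
with `‖ξ‖ ≤ ‖c‖(‖𝔭_{z₀}‖² + ‖𝔮_{z₀}‖²)`, and
`F_c(z) − F_c(z₀) = (z − z₀) F_ξ(z)` for all `z`. -/
theorem stmt15 (S : JacobiSetup) (c : ℕ → ℂ) (hc : Summable fun n => ‖c n‖ ^ 2) (z₀ : ℂ) :
    (∀ k, Summable fun n : ℕ => ‖c (k + 1 + n) * coeffA S z₀ (k + 1 + n) k‖) ∧
    (Summable fun k => ‖xiSeq S c z₀ k‖ ^ 2) ∧
    l2norm (xiSeq S c z₀) ≤
      l2norm c * ((l2norm fun n => S.p n z₀) ^ 2 + (l2norm fun n => S.q n z₀) ^ 2) ∧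
    ∀ z : ℂ, Ffun S c z - Ffun S c z₀ = (z - z₀) * Ffun S (xiSeq S c z₀) z :=
  ⟨S.summable_norm_mul_coeffA hc z₀, S.summable_norm_xiSeq_sq hc z₀, S.l2norm_xiSeq_le hc z₀,
    S.Ffun_sub_Ffun hc z₀⟩
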